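/- arXiv:2109.13473 — 3 statements merged into one kernel-verified Lean document; each statement's English description precedes it below -/
import Mathlib

section
/- For x ≤ 0 and θ ∈ (π/2, π), the function g(x, θ) = tan θ + e^x sin(x tan θ) - e^x cos(x tan θ) tan θ satisfies g(x, θ) ≤ g(0, θ) = 0, since ∂g/∂x = e^x sin(x tan θ)(1 + tan²θ) ≥ 0 for x ≤ 0 (noting x tan θ ≥ 0 when x ≤ 0 and tan θ < 0). -/
/-!
With `t = tan θ < 0` and `u = x t ≥ 0`, the bounds `sin u ≤ u` and `cos u ≤ 1` give
`sin u - t cos u ≤ -t (1 - x)`, and `eˣ (1 - x) ≤ 1` then yields `eˣ (sin u - t cos u) ≤ -t`.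
-/

open Real

lemma Real.exp_mul_one_sub_le_one (x : ℝ) : exp x * (1 - x) ≤ 1 := by
  calc exp x * (1 - x) ≤ exp x * exp (-x) :=
        mul_le_mul_of_nonneg_left (one_sub_le_exp_neg x) (exp_nonneg x)
    _ = 1 := by rw [← exp_add, add_neg_cancel, exp_zero]

lemma Real.tan_nonpos_of_pi_div_two_le_of_le_pi {θ : ℝ} (hθ : π / 2 ≤ θ) (hθπ : θ ≤ π) :
    tan θ ≤ 0 := by
  rw [← tan_sub_pi]
  exact tan_nonpos_of_nonpos_of_neg_pi_div_two_le (by linarith) (by linarith)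

lemma add_exp_mul_sin_sub_exp_mul_cos_mul_nonpos {x t : ℝ} (hx : x ≤ 0) (ht : t ≤ 0) :
    t + exp x * sin (x * t) - exp x * cos (x * t) * t ≤ 0 := by
  have hu : 0 ≤ x * t := mul_nonneg_of_nonpos_of_nonpos hx ht
  have hbound : sin (x * t) - t * cos (x * t) ≤ -t * (1 - x) := by
    nlinarith [sin_le hu, cos_le_one (x * t)]
  calc t + exp x * sin (x * t) - exp x * cos (x * t) * t
      = t + exp x * (sin (x * t) - t * cos (x * t)) := by ring
    _ ≤ t + exp x * (-t * (1 - x)) := by gcongr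
    _ = t + -t * (exp x * (1 - x)) := by ring
    _ ≤ t + -t * 1 := by
      gcongr
      · linarith
      · exact exp_mul_one_sub_le_one x
    _ = 0 := by ring

theorem stmt_13 (x θ : ℝ) (hx : x ≤ 0) (hθ : Real.pi / 2 < θ) (hθπ : θ < Real.pi) :
    Real.tan θ + Real.exp x * Real.sin (x * Real.tan θ) -
      Real.exp x * Real.cos (x * Real.tan θ) * Real.tan θ ≤ 0 :=
  add_exp_mul_sin_sub_exp_mul_cos_mul_nonpos hx
    (tan_nonpos_of_pi_div_two_le_of_le_pi hθ.le hθπ.le)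
end

section
/- Let z ∈ ℂ \ {0} with |arg z| ≤ θ for some θ ∈ (π/2, π), additionally Re z ≤ 0 and |Im z| ≤ π. Then 1 - e^{-z} ∈ Σ_θ, i.e., |arg(1 - e^{-z})| < θ (in particular the ratio |Im(1-e^{-z})| / (-Re(1-e^{-z})) ≥ -tan θ whenever Re(1-e^{-z}) < 0). -/
/-!
For `0 ≤ θ ≤ π` the sector `|arg w| ≤ θ` is cut out by `|Im w| cos θ ≤ Re w sin θ`, since
`‖w‖ sin (|arg w| - θ)` is the difference of the two sides; the strict inequality forces
`|arg w| < θ`. For `w = 1 - exp (-z)`, with `x = Re z` and `y = |Im z| ≤ π`, the strict inequality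
reads `sin (θ + y) < exp x * sin θ`. If `θ + y > π` the left side is `≤ 0`; otherwise the
tangent line of the concave sine at `θ`, the sector condition `y cos θ ≤ x sin θ` on `z` and
`1 + x ≤ exp x` give it.
-/

open scoped Real

namespace Real

theorem sin_add_lt_sin_add_mul_cos {θ y : ℝ} (hθ : 0 ≤ θ) (hy : 0 < y) (hθy : θ + y ≤ π) :
    sin (θ + y) < sin θ + y * cos θ := by
  have h := strictConcaveOn_sin_Icc.slope_lt_of_hasDerivAt (x := θ) (y := θ + y)
    ⟨hθ, by linarith⟩ ⟨by linarith, hθy⟩ (by linarith) (hasDerivAt_sin θ)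
  rw [slope_def_field, add_sub_cancel_left, div_lt_iff₀ hy] at h
  linarith

theorem sin_add_lt_exp_mul_sin {θ x y : ℝ} (hθ : 0 < θ) (hθπ : θ < π) (hy : 0 ≤ y)
    (hyπ : y ≤ π) (hxy : x ≠ 0 ∨ y ≠ 0) (h : y * cos θ ≤ x * sin θ) :
    sin (θ + y) < exp x * sin θ := by
  have hsin : 0 < sin θ := sin_pos_of_pos_of_lt_pi hθ hθπ
  obtain rfl | hy := hy.eq_or_lt
  · have hx : x ≠ 0 := by simpa using hxy
    have hx : 0 < x := (nonneg_of_mul_nonneg_left (by simpa using h) hsin).lt_of_ne' hx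
    simpa using mul_lt_mul_of_pos_right (one_lt_exp_iff.2 hx) hsin
  rcases le_or_gt (θ + y) π with hθy | hθy
  · calc sin (θ + y) < sin θ + y * cos θ := sin_add_lt_sin_add_mul_cos hθ.le hy hθy
      _ ≤ (x + 1) * sin θ := by linarith
      _ ≤ exp x * sin θ := mul_le_mul_of_nonneg_right (add_one_le_exp x) hsin.le
  · calc sin (θ + y) = -sin (θ + y - π) := by rw [sin_sub_pi, neg_neg]
      _ ≤ 0 := neg_nonpos.2 (sin_nonneg_of_nonneg_of_le_pi (by linarith) (by linarith))
      _ < exp x * sin θ := by positivity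

end Real

namespace Complex

theorem norm_mul_sin_abs_arg (z : ℂ) : ‖z‖ * Real.sin |arg z| = |z.im| := by
  rw [← Real.abs_sin_eq_sin_abs_of_abs_le_pi (abs_arg_le_pi z), ← abs_norm z, ← abs_mul,
    norm_mul_sin_arg]

theorem norm_mul_sin_abs_arg_sub (z : ℂ) (θ : ℝ) :
    ‖z‖ * Real.sin (|arg z| - θ) = |z.im| * Real.cos θ - z.re * Real.sin θ := by
  rw [Real.sin_sub, mul_sub, ← mul_assoc, ← mul_assoc, norm_mul_sin_abs_arg, Real.cos_abs,
    norm_mul_cos_arg]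

theorem abs_im_mul_cos_le_re_mul_sin {z : ℂ} {θ : ℝ} (hθ : θ ≤ π) (h : |arg z| ≤ θ) :
    |z.im| * Real.cos θ ≤ z.re * Real.sin θ := by
  have := mul_nonpos_of_nonneg_of_nonpos (norm_nonneg z)
    (Real.sin_nonpos_of_nonpos_of_neg_pi_le (x := |arg z| - θ) (by linarith)
      (by linarith [abs_nonneg (arg z)]))
  rw [norm_mul_sin_abs_arg_sub] at this
  linarith

theorem abs_arg_lt_of_abs_im_mul_cos_lt {z : ℂ} {θ : ℝ} (hθ : 0 ≤ θ)
    (h : |z.im| * Real.cos θ < z.re * Real.sin θ) : |arg z| < θ := by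
  by_contra! h'
  have := mul_nonneg (norm_nonneg z)
    (Real.sin_nonneg_of_nonneg_of_le_pi (x := |arg z| - θ) (by linarith)
      (by linarith [abs_arg_le_pi z]))
  rw [norm_mul_sin_abs_arg_sub] at this
  linarith

theorem abs_im_one_sub_exp_neg_mul_cos_lt {z : ℂ} {θ : ℝ} (him : |z.im| ≤ π)
    (h : Real.sin (θ + |z.im|) < Real.exp z.re * Real.sin θ) :
    |(1 - exp (-z)).im| * Real.cos θ < (1 - exp (-z)).re * Real.sin θ := by
  have hre : (1 - exp (-z)).re = 1 - Real.exp (-z.re) * Real.cos |z.im| := by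
    simp [exp_re, Real.cos_abs]
  have him' : |(1 - exp (-z)).im| = Real.exp (-z.re) * Real.sin |z.im| := by
    simp [exp_im, abs_mul, Real.abs_sin_eq_sin_abs_of_abs_le_pi him]
  have := mul_lt_mul_of_pos_left h (Real.exp_pos (-z.re))
  rw [Real.sin_add, ← mul_assoc, ← Real.exp_add, neg_add_cancel, Real.exp_zero, one_mul] at this
  rw [hre, him']
  linarith

end Complex

theorem stmt_14_general (θ : ℝ) (hθ : Real.pi / 2 < θ) (hθπ : θ < Real.pi)
    (z : ℂ) (hz : z ≠ 0) (harg : |Complex.arg z| ≤ θ)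
    (him : |z.im| ≤ Real.pi) :
    1 - Complex.exp (-z) ≠ 0 ∧ |Complex.arg (1 - Complex.exp (-z))| < θ := by
  have hθ0 : 0 < θ := by linarith [Real.pi_pos]
  have hz' : z.re ≠ 0 ∨ |z.im| ≠ 0 := by
    contrapose! hz
    exact Complex.ext hz.1 (abs_eq_zero.1 hz.2)
  have hw := Complex.abs_im_one_sub_exp_neg_mul_cos_lt him <|
    Real.sin_add_lt_exp_mul_sin hθ0 hθπ (abs_nonneg _) him hz'
      (Complex.abs_im_mul_cos_le_re_mul_sin hθπ.le harg)
  refine ⟨fun h ↦ ?_, Complex.abs_arg_lt_of_abs_im_mul_cos_lt hθ0.le hw⟩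
  simp [h] at hw

theorem stmt_14 (θ : ℝ) (hθ : Real.pi / 2 < θ) (hθπ : θ < Real.pi)
    (z : ℂ) (hz : z ≠ 0) (harg : |Complex.arg z| ≤ θ)
    (hre : z.re ≤ 0) (him : |z.im| ≤ Real.pi) :
    1 - Complex.exp (-z) ≠ 0 ∧ |Complex.arg (1 - Complex.exp (-z))| < θ :=
  stmt_14_general θ hθ hθπ z hz harg him
end

section
/- For θ ∈ (π/2, π) with 2 - e^{-(θ-π/2)/tan θ} sin θ > 0 (which holds for θ below a critical angle θ̃ ∈ (π/2, π)), and z = x + iy with x ≤ 0, x tan θ ≤ |y| ≤ π, the quantity 2 - e^{-x} cos y is strictly positive. -/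
open Real

/-- Key inequality: `cos s * (cos u - 1) ≤ sin s * (sin u - u)` for `0 < s < π/2`,
`0 ≤ s + u < π/2`. -/
lemma aux_key (s u : ℝ) (hs0 : 0 < s) (hs2 : s < Real.pi / 2) (hsu0 : 0 ≤ s + u)
    (hsu : s + u < Real.pi / 2) :
    Real.cos s * (Real.cos u - 1) ≤ Real.sin s * (Real.sin u - u) := by
  rcases le_or_gt u 0 with hu | hu
  · have h1 : Real.cos u - 1 ≤ 0 := by linarith [Real.cos_le_one u]
    have h2 : u ≤ Real.sin u := by
      have := Real.sin_le (neg_nonneg.mpr hu)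
      rw [Real.sin_neg] at this; linarith
    have hcs : 0 < Real.cos s := Real.cos_pos_of_mem_Ioo ⟨by linarith, hs2⟩
    have hss : 0 < Real.sin s := Real.sin_pos_of_pos_of_lt_pi hs0 (by linarith [Real.pi_pos])
    nlinarith
  · -- u > 0, s < π/2 - u
    have hu2 : u < Real.pi / 2 := by linarith
    have hsin : Real.sin s ≤ Real.cos u := by
      rw [← Real.sin_pi_div_two_sub]
      exact Real.sin_le_sin_of_le_of_le_pi_div_two (by linarith) (by linarith) (by linarith)
    have hcos : Real.sin u ≤ Real.cos s := by
      rw [← Real.sin_pi_div_two_sub]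
      exact Real.sin_le_sin_of_le_of_le_pi_div_two (by linarith) (by linarith) (by linarith)
    have htan : u * Real.cos u ≤ Real.sin u := by
      have h1 : u < Real.tan u := Real.lt_tan hu hu2
      have h2 : 0 < Real.cos u := Real.cos_pos_of_mem_Ioo ⟨by linarith, hu2⟩
      rw [Real.tan_eq_sin_div_cos] at h1
      calc u * Real.cos u ≤ (Real.sin u / Real.cos u) * Real.cos u := by
            exact mul_le_mul_of_nonneg_right h1.le h2.le
        _ = Real.sin u := by field_simp
    have h1cos : 0 ≤ 1 - Real.cos u := by linarith [Real.cos_le_one u]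
    have husin : 0 ≤ u - Real.sin u := by linarith [Real.sin_le hu.le]
    -- cos s * (1 - cos u) ≥ sin u * (1 - cos u) ≥ cos u * (u - sin u) ≥ sin s * (u - sin u)
    have hA : Real.sin u * (1 - Real.cos u) ≥ Real.cos u * (u - Real.sin u) := by nlinarith
    nlinarith [mul_le_mul_of_nonneg_right hcos h1cos, mul_le_mul_of_nonneg_right hsin husin]

/-- The maximum of `exp (tan s * t) * cos t` over `t ∈ [0, π/2)` is at `t = s`. -/
lemma aux_max (s t : ℝ) (hs0 : 0 < s) (hs : s < Real.pi / 2) (ht0 : 0 ≤ t)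
    (ht : t < Real.pi / 2) :
    Real.exp (Real.tan s * t) * Real.cos t ≤ Real.exp (Real.tan s * s) * Real.cos s := by
  set u := t - s with hu
  have hcs : 0 < Real.cos s := Real.cos_pos_of_mem_Ioo ⟨by linarith, hs⟩
  have hss : 0 < Real.sin s := Real.sin_pos_of_pos_of_lt_pi hs0 (by linarith [Real.pi_pos])
  have hkey := aux_key s u hs0 hs (by simp [hu]; linarith) (by simp [hu]; linarith)
  -- cos t = cos s cos u - sin s sin u ≤ cos s - sin s * u ≤ cos s * exp (- tan s * u)
  have hct : Real.cos t = Real.cos s * Real.cos u - Real.sin s * Real.sin u := by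
    have : t = s + u := by ring
    rw [this, Real.cos_add]
  have step1 : Real.cos t ≤ Real.cos s - Real.sin s * u := by rw [hct]; nlinarith
  have step2 : Real.cos s - Real.sin s * u ≤ Real.cos s * Real.exp (-(Real.tan s * u)) := by
    have hexp : 1 + (-(Real.tan s * u)) ≤ Real.exp (-(Real.tan s * u)) := by
      linarith [Real.add_one_le_exp (-(Real.tan s * u))]
    have htaneq : Real.tan s * Real.cos s = Real.sin s := by
      rw [Real.tan_eq_sin_div_cos]; field_simp
    nlinarith [mul_le_mul_of_nonneg_left hexp hcs.le]
  have step3 : Real.cos t ≤ Real.cos s * Real.exp (-(Real.tan s * u)) := step1.trans step2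
  have hE : 0 < Real.exp (Real.tan s * t) := Real.exp_pos _
  calc Real.exp (Real.tan s * t) * Real.cos t
      ≤ Real.exp (Real.tan s * t) * (Real.cos s * Real.exp (-(Real.tan s * u))) :=
        mul_le_mul_of_nonneg_left step3 hE.le
    _ = Real.exp (Real.tan s * s) * Real.cos s := by
        rw [show Real.exp (Real.tan s * t) * (Real.cos s * Real.exp (-(Real.tan s * u)))
            = Real.exp (Real.tan s * t) * Real.exp (-(Real.tan s * u)) * Real.cos s by ring,
          ← Real.exp_add,
          show Real.tan s * t + -(Real.tan s * u) = Real.tan s * s by rw [hu]; ring]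

theorem stmt_15 (θ x y : ℝ) (hθ : Real.pi / 2 < θ) (hθπ : θ < Real.pi)
    (hθg : 0 < 2 - Real.exp (-(θ - Real.pi / 2) / Real.tan θ) * Real.sin θ)
    (hx : x ≤ 0) (hy1 : x * Real.tan θ ≤ |y|) (hy2 : |y| ≤ Real.pi) :
    0 < 2 - Real.exp (-x) * Real.cos y := by
  have hcy : Real.cos y = Real.cos |y| := (Real.cos_abs y).symm
  set t := |y| with ht
  have ht0 : 0 ≤ t := abs_nonneg y
  rw [hcy]
  rcases le_or_gt (Real.cos t) 0 with hct | hct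
  · nlinarith [Real.exp_pos (-x), mul_nonpos_of_nonneg_of_nonpos (Real.exp_pos (-x)).le hct]
  · have htpi2 : t < Real.pi / 2 := by
      by_contra h
      push_neg at h
      exact absurd (Real.cos_nonpos_of_pi_div_two_le_of_le h (by linarith [Real.pi_pos]))
        (not_le.mpr hct)
    set s := θ - Real.pi / 2 with hsdef
    have hs0 : 0 < s := by simp only [hsdef]; linarith
    have hs2 : s < Real.pi / 2 := by simp only [hsdef]; linarith
    have hcs : 0 < Real.cos s := Real.cos_pos_of_mem_Ioo ⟨by linarith, hs2⟩
    have hss : 0 < Real.sin s := Real.sin_pos_of_pos_of_lt_pi hs0 (by simp only [hsdef]; linarith)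
    have hθeq : θ = s + Real.pi / 2 := by rw [hsdef]; ring
    have hsinθ : Real.sin θ = Real.cos s := by
      rw [hθeq, Real.sin_add, Real.sin_pi_div_two, Real.cos_pi_div_two]; ring
    have hcosθ : Real.cos θ = -Real.sin s := by
      rw [hθeq, Real.cos_add, Real.sin_pi_div_two, Real.cos_pi_div_two]; ring
    have htanθ : Real.tan θ = -(Real.cos s / Real.sin s) := by
      rw [Real.tan_eq_sin_div_cos, hsinθ, hcosθ, div_neg]
    -- hθg rewritten: exp (tan s * s) * cos s < 2
    have hθg' : Real.exp (Real.tan s * s) * Real.cos s < 2 := by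
      have harg : -(θ - Real.pi / 2) / Real.tan θ = Real.tan s * s := by
        rw [htanθ, Real.tan_eq_sin_div_cos, ← hsdef]
        field_simp
      rw [harg, hsinθ] at hθg
      linarith
    -- -x ≤ tan s * t
    have hxt : -x ≤ Real.tan s * t := by
      rw [htanθ] at hy1
      have h0 : -x * (Real.cos s / Real.sin s) ≤ t := by
        calc -x * (Real.cos s / Real.sin s) = x * -(Real.cos s / Real.sin s) := by ring
          _ ≤ t := hy1
      have h2 := mul_le_mul_of_nonneg_right h0 hss.le
      have h1 : -x * Real.cos s ≤ t * Real.sin s := by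
        calc -x * Real.cos s = -x * (Real.cos s / Real.sin s) * Real.sin s := by
              rw [mul_assoc, div_mul_cancel₀ _ hss.ne']
          _ ≤ t * Real.sin s := h2
      rw [Real.tan_eq_sin_div_cos, div_mul_eq_mul_div, le_div_iff₀ hcs]
      linarith
    have h1 : Real.exp (-x) ≤ Real.exp (Real.tan s * t) := Real.exp_le_exp.mpr hxt
    have h2 := aux_max s t hs0 hs2 ht0 htpi2
    nlinarith [mul_le_mul_of_nonneg_right h1 hct.le]
end
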